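/- arXiv:math/0204358 — 3 statements merged into one kernel-verified Lean document; each statement's English description precedes it below -/
import Mathlib

section
/- Let R be a commutative Noetherian ring of finite Krull dimension and M a finitely generated R-module. If M has an infinite strictly descending chain of submodules M = M₀ ⊋ M₁ ⊋ M₂ ⊋ ... such that every subquotient M_i/M_{i+1} is nonzero of Krull dimension α, then the Krull dimension of M is strictly greater than α. -/
/-- The Krull dimension of a finitely generated module over a commutative ring:
the Krull dimension of `R / Ann(M)`. -/
noncomputable def moduleKrullDim (R : Type*) [CommRing R] (M : Type*) [AddCommGroup M]
    [Module R M] : WithBot (WithTop ℕ) :=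
  ringKrullDim (R ⧸ Module.annihilator R M)

/-!
Suppose `dim M ≤ α`. Each subquotient `Qᵢ = Nᵢ/Nᵢ₊₁` has dimension `α`, so some prime over
`Ann Qᵢ ⊇ Ann M` has coheight `≥ α`; as `dim R/Ann M ≤ α`, that prime is minimal over `Ann M`.
There are finitely many minimal primes `p` of `Ann M`, and `Mₚ` is Artinian at each of them, so
all the localized chains `(Nᵢ)ₚ` stabilize from some index on. Beyond it `(Qᵢ)ₚ = 0` for every
minimal prime `p`, contradicting the first step.
-/

open Filter Order

lemma Order.isMin_of_krullDim_le_coheight {α : Type*} [Preorder α] {a : α} {n : ℕ}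
    (hdim : krullDim α ≤ n) (ha : n ≤ coheight a) : IsMin a := by
  intro b hba
  by_contra hab
  have hdim' (x : α) : coheight x ≤ n := by exact_mod_cast (coheight_le_krullDim x).trans hdim
  have hfin : coheight a < ⊤ := (hdim' a).trans_lt (ENat.natCast_lt_top n)
  exact (coheight_strictAnti (lt_of_le_not_ge hba hab) hfin).not_ge ((hdim' b).trans ha)

section

variable {R : Type*} [CommRing R]

lemma Ideal.exists_mem_minimalPrimes_ge_of_ringKrullDim_quotient_le {I J : Ideal R} (hIJ : I ≤ J)
    {n : ℕ} (hI : ringKrullDim (R ⧸ I) ≤ n) (hJ : n ≤ ringKrullDim (R ⧸ J)) :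
    ∃ q ∈ I.minimalPrimes, J ≤ q := by
  rw [ringKrullDim_quotient, le_krullDim_iff] at hJ
  obtain ⟨l, hl⟩ := hJ
  let ι := Set.inclusion (PrimeSpectrum.zeroLocus_anti_mono_ideal hIJ)
  have hq : n ≤ coheight (ι l.head) :=
    hl ▸ length_le_coheight_head.trans
      (coheight_le_coheight_apply_of_strictMono ι (fun _ _ h ↦ h) _)
  have hmin : IsMin (ι l.head) :=
    isMin_of_krullDim_le_coheight (by rwa [← ringKrullDim_quotient]) hq
  refine ⟨(ι l.head).1.asIdeal, ⟨⟨(ι l.head).1.isPrime, (ι l.head).2⟩, ?_⟩, l.head.2⟩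
  rintro r ⟨hr, hIr⟩ hrq
  exact hmin (b := ⟨⟨r, hr⟩, hIr⟩) hrq

variable {M : Type*} [AddCommGroup M] [Module R M]

lemma Module.isArtinian_of_le_annihilator [Module.Finite R M] {I : Ideal R}
    [IsArtinianRing (R ⧸ I)] (hI : I ≤ Module.annihilator R M) : IsArtinian R M := by
  have hM : Module.IsTorsionBySet R M I :=
    (Module.isTorsionBySet_iff_subset_annihilator R M).mpr hI
  let := hM.module
  have := hM.isScalarTower (S := R)
  have : Module.Finite (R ⧸ I) M := .of_restrictScalars_finite R _ _
  exact isArtinian_of_surjective_algebraMap (R := R ⧸ I) Ideal.Quotient.mk_surjective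

lemma Module.map_annihilator_le_annihilator_localizedModule (S : Submonoid R) :
    (Module.annihilator R M).map (algebraMap R (Localization S)) ≤
      Module.annihilator (Localization S) (LocalizedModule S M) := by
  rw [Ideal.map_le_iff_le_comap, Module.comap_annihilator]
  intro a ha
  rw [Module.mem_annihilator]
  intro x
  induction x using LocalizedModule.induction_on with
  | h m s => rw [LocalizedModule.smul'_mk, Module.mem_annihilator.mp ha, LocalizedModule.zero_mk]

lemma isArtinian_localizedModule_of_mem_minimalPrimes [IsNoetherianRing R] [Module.Finite R M]
    {p : Ideal R} [p.IsPrime] (hp : p ∈ (Module.annihilator R M).minimalPrimes) :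
    IsArtinian (Localization.AtPrime p) (LocalizedModule p.primeCompl M) := by
  have : IsArtinianRing (Localization.AtPrime p ⧸
      (Module.annihilator R M).map (algebraMap R (Localization.AtPrime p))) := by
    apply IsLocalRing.quotient_artinian_of_mem_minimalPrimes_of_isLocalRing
    rwa [IsLocalization.minimalPrimes_map p.primeCompl (Localization.AtPrime p), Set.mem_preimage,
      IsLocalization.AtPrime.under_maximalIdeal (Localization.AtPrime p) p]
  exact Module.isArtinian_of_le_annihilator
    (Module.map_annihilator_le_annihilator_localizedModule _)

lemma Submodule.exists_smul_mem_of_localized_le {S : Submonoid R} {N N' : Submodule R M}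
    (h : N.localized S ≤ N'.localized S) {x : M} (hx : x ∈ N) : ∃ s ∈ S, s • x ∈ N' := by
  obtain ⟨y, hy, s, e⟩ := h (show LocalizedModule.mkLinearMap S M x ∈ N.localized S from
    ⟨x, hx, 1, IsLocalizedModule.mk'_one S _ x⟩)
  rw [IsLocalizedModule.mk'_eq_iff, Submonoid.smul_def, ← map_smul] at e
  obtain ⟨c, hc⟩ := IsLocalizedModule.exists_of_eq (S := S) e
  refine ⟨c * s, mul_mem c.2 s.2, ?_⟩
  rw [mul_smul, ← Submonoid.smul_def c, ← hc]
  exact N'.smul_mem (c : R) hy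

lemma Submodule.localized_not_le_of_annihilator_le {N N' : Submodule R M} [Module.Finite R N]
    {p : Ideal R} [p.IsPrime] (h : Module.annihilator R (N ⧸ N'.comap N.subtype) ≤ p) :
    ¬ N.localized p.primeCompl ≤ N'.localized p.primeCompl := by
  intro hle
  obtain ⟨m, hm⟩ := Module.mem_support_iff_exists_annihilator.mp
    (Module.mem_support_iff_of_finite.mpr h : (⟨p, ‹_›⟩ : PrimeSpectrum R) ∈ _)
  obtain ⟨x, rfl⟩ := Submodule.Quotient.mk_surjective _ m
  obtain ⟨s, hs, hsx⟩ := exists_smul_mem_of_localized_le hle x.2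
  refine hs (hm ((Submodule.mem_annihilator_span_singleton _ _).mpr ?_))
  rw [← Submodule.Quotient.mk_smul, Submodule.Quotient.mk_eq_zero]
  exact hsx

lemma eventually_not_annihilator_subquotient_le [IsNoetherianRing R] [Module.Finite R M]
    {N : ℕ → Submodule R M} (hN : Antitone N) {p : Ideal R} [p.IsPrime]
    (hp : p ∈ (Module.annihilator R M).minimalPrimes) :
    ∀ᶠ i in atTop, ¬ Module.annihilator R (N i ⧸ (N (i + 1)).comap (N i).subtype) ≤ p := by
  have := isArtinian_localizedModule_of_mem_minimalPrimes hp
  obtain ⟨n, hn⟩ := eventuallyConst_atTop_nat.mp <| IsArtinian.eventuallyConst_of_isArtinian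
    ⟨fun i ↦ OrderDual.toDual ((N i).localized p.primeCompl),
      fun _ _ h _ ⟨m, hm, s, e⟩ ↦ ⟨m, hN h hm, s, e⟩⟩
  filter_upwards [eventually_ge_atTop n] with i hi
  exact fun h ↦ Submodule.localized_not_le_of_annihilator_le h
    (congrArg OrderDual.ofDual (hn i hi)).ge

end

theorem krullDim_gt_of_infinite_chain_general
    {R : Type*} [CommRing R] [IsNoetherianRing R]
    {M : Type*} [AddCommGroup M] [Module R M] [Module.Finite R M]
    (α : ℕ) (N : ℕ → Submodule R M)
    (hdesc : ∀ i, N (i + 1) < N i)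
    (hdim : ∀ i, moduleKrullDim R
        ((N i) ⧸ (Submodule.comap (N i).subtype (N (i + 1)))) = (α : WithBot (WithTop ℕ))) :
    (α : WithBot (WithTop ℕ)) < moduleKrullDim R M := by
  by_contra! hle
  have hcover (i : ℕ) : ∃ p ∈ (Module.annihilator R M).minimalPrimes,
      Module.annihilator R (N i ⧸ (N (i + 1)).comap (N i).subtype) ≤ p := by
    refine Ideal.exists_mem_minimalPrimes_ge_of_ringKrullDim_quotient_le ?_ hle (hdim i).ge
    exact ((N i).subtype.annihilator_le_of_injective (N i).injective_subtype).trans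
      ((Submodule.mkQ _).annihilator_le_of_surjective (Submodule.mkQ_surjective _))
  have hanti : Antitone N := antitone_nat_of_succ_le fun i ↦ (hdesc i).le
  obtain ⟨i, hi⟩ := ((eventually_all_finite
    (Module.annihilator R M).finite_minimalPrimes_of_isNoetherianRing).mpr fun p hp ↦
      have := hp.isPrime
      eventually_not_annihilator_subquotient_le hanti hp).exists
  obtain ⟨p, hp, hann⟩ := hcover i
  exact hi p hp hann

/-- Let `R` be a commutative Noetherian ring of finite Krull dimension and
`M` a finitely generated `R`-module.  If `M` admits an infinite strictly descending chain of
submodules `M = N₀ ⊋ N₁ ⊋ N₂ ⊋ ⋯` all of whose subquotients `Nᵢ/Nᵢ₊₁` are nonzero of Krull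
dimension `α`, then the Krull dimension of `M` is strictly greater than `α`. -/
theorem krullDim_gt_of_infinite_chain
    {R : Type*} [CommRing R] [IsNoetherianRing R] (hR : ringKrullDim R < ⊤)
    {M : Type*} [AddCommGroup M] [Module R M] [Module.Finite R M]
    (α : ℕ) (N : ℕ → Submodule R M) (hN0 : N 0 = ⊤)
    (hdesc : ∀ i, N (i + 1) < N i)
    (hdim : ∀ i, moduleKrullDim R
        ((N i) ⧸ (Submodule.comap (N i).subtype (N (i + 1)))) = (α : WithBot (WithTop ℕ))) :
    (α : WithBot (WithTop ℕ)) < moduleKrullDim R M :=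
  krullDim_gt_of_infinite_chain_general α N hdesc hdim
end

section
/- Let Λ = Z_p[[G]] and Ω = F_p[[G]] ≅ Λ/p be completed group algebras of a profinite group G, and assume both are Noetherian integral domains. If M is a Λ-module without p-torsion and Ann_Λ(M) ≠ 0, then Ann_Ω(M/pM) ≠ 0. -/
/-- Let `Λ = ℤ_p[[G]]` and `Ω = 𝔽_p[[G]] ≅ Λ/p` be completed group
algebras of a profinite group `G`, both assumed to be Noetherian integral domains.  (We
axiomatize this situation: `Λ` is a Noetherian domain, `p` is central and generates a
proper completely prime ideal — i.e. `Ω = Λ/pΛ` is a nontrivial domain — and `Λ` is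
`p`-adically separated, as is any completed group algebra `ℤ_p[[G]]`.)  If `M` is a
`Λ`-module without `p`-torsion and `Ann_Λ(M) ≠ 0`, then `Ann_Ω(M/pM) ≠ 0`: there is
`f ∈ Λ` with `f ∉ pΛ` and `f·M ⊆ pM`. -/
theorem annihilator_mod_p_ne_zero
    (p : ℕ) [Fact p.Prime] {Λ : Type*} [Ring Λ] [IsDomain Λ] [IsNoetherianRing Λ]
    (hΩne : Ideal.span {(p : Λ)} ≠ ⊤)
    (hΩdom : ∀ a b : Λ, a * b ∈ Ideal.span {(p : Λ)} →
      a ∈ Ideal.span {(p : Λ)} ∨ b ∈ Ideal.span {(p : Λ)})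
    (hsep : (⨅ n : ℕ, Ideal.span {(p : Λ) ^ n}) = ⊥)
    {M : Type*} [AddCommGroup M] [Module Λ M]
    (htf : ∀ m : M, (p : Λ) • m = 0 → m = 0)
    (hann : Module.annihilator Λ M ≠ ⊥) :
    ∃ f : Λ, f ∉ Ideal.span {(p : Λ)} ∧ ∀ m : M, ∃ m' : M, f • m = (p : Λ) • m' := by
  -- p^k-torsion-free
  have htfk : ∀ (k : ℕ) (m : M), (p : Λ) ^ k • m = 0 → m = 0 := by
    intro k
    induction k with
    | zero => intro m h; simpa using h
    | succ k ih =>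
      intro m h
      apply ih
      apply htf
      rw [← mul_smul, ← pow_succ']
      exact h
  -- pick a nonzero annihilator
  obtain ⟨a, haM, ha0⟩ := Submodule.exists_mem_ne_zero_of_ne_bot hann
  -- a is not in all span {p^n}
  have hnotall : ∃ n, a ∉ Ideal.span {(p : Λ) ^ n} := by
    by_contra h
    push_neg at h
    have : a ∈ (⨅ n : ℕ, Ideal.span {(p : Λ) ^ n}) := Submodule.mem_iInf _ |>.mpr h
    rw [hsep] at this
    exact ha0 this
  classical
  let n := Nat.find hnotall
  have hn : a ∉ Ideal.span {(p : Λ) ^ n} := Nat.find_spec hnotall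
  have hn0 : n ≠ 0 := by
    intro h
    apply hn
    rw [h, pow_zero, Ideal.span_singleton_one]
    trivial
  obtain ⟨m', hm'⟩ : ∃ m', n = m' + 1 := ⟨n - 1, (Nat.succ_pred_eq_of_ne_zero hn0).symm⟩
  have hmem : a ∈ Ideal.span {(p : Λ) ^ m'} := by
    by_contra h
    have hle : n ≤ m' := Nat.find_le h
    omega
  obtain ⟨c, hc⟩ := Submodule.mem_span_singleton.mp hmem
  -- c annihilates M
  have hcann : ∀ x : M, c • x = 0 := by
    intro x
    have hax : a • x = 0 := by
      have := Module.mem_annihilator.mp haM x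
      exact this
    apply htfk m'
    have hcomm : c * (p : Λ) ^ m' = (p : Λ) ^ m' * c :=
      ((Nat.cast_commute p c).pow_left m').symm.eq
    calc (p : Λ) ^ m' • c • x = ((p : Λ) ^ m' * c) • x := by rw [mul_smul]
      _ = (c * (p : Λ) ^ m') • x := by rw [hcomm]
      _ = a • x := by rw [show c • (p:Λ)^m' = c * (p:Λ)^m' from rfl] at hc; rw [hc]
      _ = 0 := hax
  refine ⟨c, ?_, fun x => ⟨0, by rw [hcann x, smul_zero]⟩⟩
  -- c ∉ span {p}
  intro hcp
  obtain ⟨d, hd⟩ := Submodule.mem_span_singleton.mp hcp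
  apply hn
  rw [hm']
  refine Submodule.mem_span_singleton.mpr ⟨d, ?_⟩
  have : d • (p : Λ) ^ (m' + 1) = d * ((p : Λ) * (p : Λ) ^ m') := by
    rw [smul_eq_mul, pow_succ']
  rw [this, ← mul_assoc]
  rw [show d • (p:Λ) = d * (p:Λ) from rfl] at hd
  rw [hd]
  rw [show c • (p:Λ)^m' = c * (p:Λ)^m' from rfl] at hc
  exact hc
end

section
/- Let Q be the field (or skew field) of fractions of R = Z_p[[X]] and σ the automorphism of Q extending X ↦ (1+X)^ε − 1 with ε ∈ 1 + pZ_p, ε ≠ 1. Then the skew Laurent polynomial ring Q[Z, Z^{-1}; σ] is a simple ring (has no nonzero proper two-sided ideals). -/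
/-- A skew Laurent polynomial ring `L = Q[Z, Z⁻¹; σ]`: additively `L` is the group of
finitely supported `ℤ`-indexed sequences of coefficients (via `coeff`), `C` is the
inclusion of constants, `Z` an invertible variable, `C q * Z ^ k` (for `k : ℤ`) the
monomial `q Zᵏ`, and multiplication is governed by `Z·q = σ(q)·Z`. -/
structure SkewLaurent (Q L : Type*) [Ring Q] [Ring L] (σ : Q → Q) where
  coeff : L ≃+ (ℤ →₀ Q)
  C : Q →+* L
  Z : Lˣ
  coeff_monomial : ∀ (q : Q) (k : ℤ), coeff (C q * ((Z ^ k : Lˣ) : L)) = Finsupp.single k q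
  Z_mul_C : ∀ q : Q, (Z : L) * C q = C (σ q) * (Z : L)

/-!
A nonzero element `x` of a two-sided ideal with support of minimal size is a monomial `q Zᵏ`,
hence a unit. Indeed, if `k₀ ≠ k₁` both lie in the support and `σ` has infinite order, some `γ`
has `σ^k₀ γ ≠ σ^k₁ γ`; then `C (σ^k₀ γ) * x - x * C γ` lies in the ideal, its coefficient at
`Z^k` is `xₖ (σ^k₀ γ - σ^k γ)`, so it vanishes at `k₀` but not at `k₁`: a smaller nonzero
element. Distinctness of the iterates of `1 + X` makes `σ` of infinite order.
-/

namespace SkewLaurent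

open Finsupp

section Ring

variable {Q L : Type*} [Ring Q] [Ring L]

theorem coeff_symm_single {σ : Q → Q} (S : SkewLaurent Q L σ) (k : ℤ) (q : Q) :
    S.coeff.symm (single k q) = S.C q * ((S.Z ^ k : Lˣ) : L) :=
  S.coeff.symm_apply_eq.mpr (S.coeff_monomial q k).symm

@[elab_as_elim]
theorem induction_on {σ : Q → Q} (S : SkewLaurent Q L σ) {motive : L → Prop} (x : L)
    (zero : motive 0) (add : ∀ x y, motive x → motive y → motive (x + y))
    (monomial : ∀ (q : Q) (k : ℤ), motive (S.C q * ((S.Z ^ k : Lˣ) : L))) : motive x := by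
  rw [← S.coeff.symm_apply_apply x]
  induction S.coeff x using Finsupp.induction_linear with
  | zero => simpa using zero
  | add f g hf hg => simpa using add _ _ hf hg
  | single k q => simpa [coeff_symm_single] using monomial q k

theorem coeff_C_mul {σ : Q → Q} (S : SkewLaurent Q L σ) (q : Q) (x : L) :
    S.coeff (S.C q * x) = q • S.coeff x := by
  induction x using S.induction_on with
  | zero => simp
  | add x y hx hy => rw [mul_add, map_add, hx, hy, map_add, smul_add]
  | monomial c k => rw [← mul_assoc, ← map_mul, coeff_monomial, coeff_monomial, smul_single,
      smul_eq_mul]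

theorem Z_inv_mul_C {σ : Q ≃+* Q} (S : SkewLaurent Q L σ) (q : Q) :
    ((S.Z⁻¹ : Lˣ) : L) * S.C q = S.C (σ.symm q) * ((S.Z⁻¹ : Lˣ) : L) := by
  rw [Units.inv_mul_eq_iff_eq_mul, ← mul_assoc, S.Z_mul_C, σ.apply_symm_apply, mul_assoc,
    Units.mul_inv, mul_one]

theorem zpow_mul_C {σ : Q ≃+* Q} (S : SkewLaurent Q L σ) (k : ℤ) (q : Q) :
    ((S.Z ^ k : Lˣ) : L) * S.C q = S.C ((σ ^ k) q) * ((S.Z ^ k : Lˣ) : L) := by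
  induction k using Int.induction_on generalizing q with
  | zero => simp
  | succ n ih =>
    rw [zpow_add_one, zpow_add_one, Units.val_mul, mul_assoc, S.Z_mul_C, ← mul_assoc, ih,
      mul_assoc, RingAut.mul_apply]
  | pred n ih =>
    rw [zpow_sub_one, zpow_sub_one, Units.val_mul, mul_assoc, S.Z_inv_mul_C, ← mul_assoc, ih,
      mul_assoc, RingAut.mul_apply]
    rfl

theorem coeff_mul_C {σ : Q ≃+* Q} (S : SkewLaurent Q L σ) (x : L) (q : Q) (j : ℤ) :
    S.coeff (x * S.C q) j = S.coeff x j * (σ ^ j) q := by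
  induction x using S.induction_on with
  | zero => simp
  | add x y hx hy =>
    rw [add_mul, map_add, Finsupp.add_apply, hx, hy, map_add, Finsupp.add_apply, add_mul]
  | monomial c k =>
    rw [mul_assoc, zpow_mul_C, ← mul_assoc, ← map_mul, coeff_monomial, coeff_monomial]
    by_cases hjk : k = j
    · subst hjk; simp
    · simp [hjk]

end Ring

section DivisionRing

variable {Q L : Type*} [DivisionRing Q] [Ring L] {σ : Q → Q} (S : SkewLaurent Q L σ)

theorem isUnit_C_mul_zpow {q : Q} (hq : q ≠ 0) (k : ℤ) :
    IsUnit (S.C q * ((S.Z ^ k : Lˣ) : L)) :=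
  ((isUnit_iff_ne_zero.mpr hq).map S.C).mul (S.Z ^ k).isUnit

theorem isUnit_of_card_support_eq_one {x : L} (hx : (S.coeff x).support.card = 1) : IsUnit x := by
  obtain ⟨k, hk⟩ := Finset.card_eq_one.mp hx
  have hxk : S.coeff x = single k (S.coeff x k) := support_subset_singleton.mp hk.subset
  have hq : S.coeff x k ≠ 0 := mem_support_iff.mp (hk ▸ Finset.mem_singleton_self k)
  rw [← S.coeff.symm_apply_apply x, hxk, coeff_symm_single]
  exact S.isUnit_C_mul_zpow hq k

end DivisionRing

section Field

variable {Q L : Type*} [Field Q] [Ring L] {σ : Q ≃+* Q}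

theorem coeff_C_mul_sub_mul_C (S : SkewLaurent Q L σ) (x : L) (k : ℤ) (γ : Q) (j : ℤ) :
    S.coeff (S.C ((σ ^ k) γ) * x - x * S.C γ) j = S.coeff x j * ((σ ^ k) γ - (σ ^ j) γ) := by
  rw [map_sub, Finsupp.sub_apply, coeff_C_mul, coeff_mul_C, Finsupp.smul_apply, smul_eq_mul]
  ring

theorem exists_mem_card_support_lt (S : SkewLaurent Q L σ) (hσ : ¬IsOfFinOrder σ) (I : Ideal L)
    (hI : ∀ x ∈ I, ∀ b : L, x * b ∈ I) {x : L} (hx : x ∈ I)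
    (h : 1 < (S.coeff x).support.card) :
    ∃ y ∈ I, y ≠ 0 ∧ (S.coeff y).support.card < (S.coeff x).support.card := by
  obtain ⟨k₀, hk₀, k₁, hk₁, hne⟩ := Finset.one_lt_card.mp h
  obtain ⟨γ, hγ⟩ : ∃ γ, (σ ^ k₀) γ ≠ (σ ^ k₁) γ := by
    by_contra! hγ
    exact (injective_zpow_iff_not_isOfFinOrder.mpr hσ).ne hne (RingEquiv.ext hγ)
  set y := S.C ((σ ^ k₀) γ) * x - x * S.C γ
  have hy := S.coeff_C_mul_sub_mul_C x k₀ γ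
  have hy₁ : S.coeff y k₁ ≠ 0 := by
    rw [hy]
    exact mul_ne_zero (mem_support_iff.mp hk₁) (sub_ne_zero.mpr hγ)
  have hsupp : (S.coeff y).support ⊆ (S.coeff x).support.erase k₀ := by
    intro j hj
    rw [mem_support_iff, hy] at hj
    rw [Finset.mem_erase, mem_support_iff]
    exact ⟨by rintro rfl; simp at hj, left_ne_zero_of_mul hj⟩
  refine ⟨y, I.sub_mem (I.mul_mem_left _ hx) (hI x hx _), ?_, ?_⟩
  · intro hy0
    simp [hy0] at hy₁
  · exact (Finset.card_le_card hsupp).trans_lt (Finset.card_erase_lt_of_mem hk₀)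

theorem eq_bot_or_eq_top (S : SkewLaurent Q L σ) (hσ : ¬IsOfFinOrder σ) (I : Ideal L)
    (hI : ∀ x ∈ I, ∀ b : L, x * b ∈ I) : I = ⊥ ∨ I = ⊤ := by
  refine or_iff_not_imp_left.mpr fun hbot => ?_
  obtain ⟨x, ⟨hxI, hx0⟩, hmin⟩ :=
    (measure fun x : L => (S.coeff x).support.card).wf.has_min {x | x ∈ I ∧ x ≠ 0}
      (Submodule.exists_mem_ne_zero_of_ne_bot hbot)
  have hcard : (S.coeff x).support.card = 1 := by
    refine le_antisymm (not_lt.mp fun h => ?_) (Finset.one_le_card.mpr ?_)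
    · obtain ⟨y, hyI, hy0, hlt⟩ := S.exists_mem_card_support_lt hσ I hI hxI h
      exact hmin y ⟨hyI, hy0⟩ hlt
    · simpa using hx0
  exact I.eq_top_of_isUnit_mem hxI (S.isUnit_of_card_support_eq_one hcard)

end Field

end SkewLaurent

theorem skewLaurent_isSimpleRing_general
    (p : ℕ) [Fact p.Prime]
    (σ : FractionRing (PowerSeries ℤ_[p]) ≃+* FractionRing (PowerSeries ℤ_[p]))
    (hσγ : ∀ m n : ℕ, m ≠ n →
      (⇑σ)^[m] (algebraMap (PowerSeries ℤ_[p]) (FractionRing (PowerSeries ℤ_[p]))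
          (1 + PowerSeries.X)) ≠
        (⇑σ)^[n] (algebraMap (PowerSeries ℤ_[p]) (FractionRing (PowerSeries ℤ_[p]))
          (1 + PowerSeries.X)))
    {L : Type*} [Ring L] (S : SkewLaurent (FractionRing (PowerSeries ℤ_[p])) L (⇑σ))
    (I : Ideal L) (hIright : ∀ x ∈ I, ∀ b : L, x * b ∈ I) :
    I = ⊥ ∨ I = ⊤ := by
  have hσ : ¬IsOfFinOrder σ := by
    intro hfin
    obtain ⟨n, hn, hσn⟩ := isOfFinOrder_iff_pow_eq_one.mp hfin
    apply hσγ n 0 hn.ne'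
    rw [← RingAut.coe_pow, hσn]
    rfl
  exact S.eq_bot_or_eq_top hσ I hIright

/-- Let `Q` be the field of fractions of `R = ℤ_p[[X]]` and `σ` the
automorphism of `Q` extending `X ↦ (1+X)^ε − 1` with `ε ∈ 1 + pℤ_p`, `ε ≠ 1`
(axiomatized: `σ` preserves `R` inside `Q` and the iterates `σⁱ(γ)` of the unit
`γ = 1 + X` are pairwise distinct).  Then the skew Laurent polynomial ring
`Q[Z, Z⁻¹; σ]` is a simple ring: it has no two-sided ideals other than `0` and the whole
ring. -/
theorem skewLaurent_isSimpleRing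
    (p : ℕ) [Fact p.Prime]
    (σ : FractionRing (PowerSeries ℤ_[p]) ≃+* FractionRing (PowerSeries ℤ_[p]))
    (hσR : ∀ r : PowerSeries ℤ_[p], ∃ r' : PowerSeries ℤ_[p],
      σ (algebraMap (PowerSeries ℤ_[p]) (FractionRing (PowerSeries ℤ_[p])) r) =
        algebraMap (PowerSeries ℤ_[p]) (FractionRing (PowerSeries ℤ_[p])) r')
    (hσγ : ∀ m n : ℕ, m ≠ n →
      (⇑σ)^[m] (algebraMap (PowerSeries ℤ_[p]) (FractionRing (PowerSeries ℤ_[p]))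
          (1 + PowerSeries.X)) ≠
        (⇑σ)^[n] (algebraMap (PowerSeries ℤ_[p]) (FractionRing (PowerSeries ℤ_[p]))
          (1 + PowerSeries.X)))
    {L : Type*} [Ring L] (S : SkewLaurent (FractionRing (PowerSeries ℤ_[p])) L (⇑σ))
    (I : Ideal L) (hIright : ∀ x ∈ I, ∀ b : L, x * b ∈ I) :
    I = ⊥ ∨ I = ⊤ :=
  skewLaurent_isSimpleRing_general p σ hσγ S I hIright
end
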